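/- Let τ be a non-identity permutation of length at least 3. A permutation π of length n satisfies s_{213,τ}(π) = identity if and only if π = n·ρ where ρ is a 231-avoiding permutation of {1,…,n−1}; in particular the number of such π is C_{n−1}. -/

import Mathlib

open List

attribute [local instance] Classical.propDecidable

/-- `u` is order-isomorphic to `v`. -/
def OrdIso (u v : List ℕ) : Prop :=
  u.length = v.length ∧
    ∀ i j, i < u.length → j < u.length →
      (u.getD i 0 < u.getD j 0 ↔ v.getD i 0 < v.getD j 0)

/-- The word `w` contains the pattern `p`. -/
def Contains (w p : List ℕ) : Prop :=
  ∃ u, u.Sublist w ∧ OrdIso u p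

/-- The word `w` avoids every pattern in `T`. -/
def AvoidsSet (T : Set (List ℕ)) (w : List ℕ) : Prop :=
  ∀ p ∈ T, ¬ Contains w p

/-- One step of the `T`-avoiding stack machine: state is (input, stack, output);
the stack is read top to bottom (head is the top). -/
noncomputable def sTaux (T : Set (List ℕ)) : List ℕ → List ℕ → List ℕ → List ℕ
  | [], stack, out => out ++ stack
  | x :: rest, stack, out =>
    if AvoidsSet T (x :: stack) then sTaux T rest (x :: stack) out
    else
      match stack with
      | [] => sTaux T rest [x] out
      | y :: s => sTaux T (x :: rest) s (out ++ [y])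
termination_by input stack _ => 2 * input.length + stack.length
decreasing_by all_goals first | (simp_wf; omega) | omega | simp_wf

/-- The stack-sorting map `s_T`. -/
noncomputable def sT (T : Set (List ℕ)) (w : List ℕ) : List ℕ := sTaux T w [] []

/-- `w` is a permutation of `{1, …, w.length}`. -/
def IsPermList (w : List ℕ) : Prop := w.Perm (List.range' 1 w.length)

/-- `T` is reduced: no element of `T` contains another element of `T`. -/
def Reduced (T : Set (List ℕ)) : Prop :=
  ∀ σ ∈ T, ∀ τ ∈ T, σ ≠ τ → ¬ Contains σ τ

/-- `σ̂`: swap the first two entries of `σ`. -/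
def hat : List ℕ → List ℕ
  | a :: b :: t => b :: a :: t
  | l => l

/-!
The first entry `p` of `π` is pushed onto the empty stack and is never popped: a pop of `p` would
mean that `x p` contains a pattern of `T`, but all patterns of `T` have length at least 3. So
`s_T(π)` ends with `p`, and `p = n` if `s_T(π)` is the identity. Once `n` sits at the bottom, an
entry `x` may be pushed onto a top `y` iff `x < y`: if `y < x` then `x y n` is a 213, while an
increasing stack avoids both 213 and the non-identity `τ`. Hence `s_T(n·ρ) = s(ρ)·n` for the
classical stack-sorting map `s`, and by Knuth `s(ρ)` is the identity iff `ρ` avoids 231. This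
follows by splitting `ρ = L m R` at its maximum: `s(L m R) = s(L) s(R) m`, and `L m R` avoids 231
iff `L` and `R` do and every entry of `L` is below every entry of `R`. The same splitting is a
bijection between 231-avoiding permutations of length `m` and binary trees with `m` nodes, which
are counted by `C_m`.
-/

lemma ordIso_231_iff {x y z : ℕ} : OrdIso [x, y, z] [2, 3, 1] ↔ z < x ∧ x < y := by
  constructor
  · rintro ⟨-, h⟩
    exact ⟨by simpa using (h 2 0 (by simp) (by simp)).mpr (by simp),
      by simpa using (h 0 1 (by simp) (by simp)).mpr (by simp)⟩
  · rintro ⟨hzx, hxy⟩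
    refine ⟨rfl, fun i j hi hj => ?_⟩
    simp only [List.length_cons, List.length_nil] at hi hj
    interval_cases i <;> interval_cases j <;> simp <;> omega

lemma ordIso_213_iff {x y z : ℕ} : OrdIso [x, y, z] [2, 1, 3] ↔ y < x ∧ x < z := by
  constructor
  · rintro ⟨-, h⟩
    exact ⟨by simpa using (h 1 0 (by simp) (by simp)).mpr (by simp),
      by simpa using (h 0 2 (by simp) (by simp)).mpr (by simp)⟩
  · rintro ⟨hyx, hxz⟩
    refine ⟨rfl, fun i j hi hj => ?_⟩
    simp only [List.length_cons, List.length_nil] at hi hj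
    interval_cases i <;> interval_cases j <;> simp <;> omega

lemma contains_iff_of_length_eq_three {w p : List ℕ} (hp : p.length = 3) :
    Contains w p ↔ ∃ x y z, [x, y, z] <+ w ∧ OrdIso [x, y, z] p := by
  constructor
  · rintro ⟨u, hu, hiso⟩
    match u, hiso.1.trans hp with
    | [x, y, z], _ => exact ⟨x, y, z, hu, hiso⟩
  · rintro ⟨x, y, z, hu, hiso⟩
    exact ⟨_, hu, hiso⟩

lemma contains_231_iff {w : List ℕ} :
    Contains w [2, 3, 1] ↔ ∃ x y z, [x, y, z] <+ w ∧ z < x ∧ x < y := by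
  simp [contains_iff_of_length_eq_three, ordIso_231_iff]

lemma Contains.mono {u w p : List ℕ} (huw : u <+ w) (h : Contains u p) : Contains w p :=
  let ⟨v, hv, hiso⟩ := h
  ⟨v, hv.trans huw, hiso⟩

lemma Contains.length_le {w p : List ℕ} (h : Contains w p) : p.length ≤ w.length :=
  let ⟨_, hu, hiso⟩ := h
  hiso.1 ▸ hu.length_le

lemma avoidsSet_of_length_lt {T : Set (List ℕ)} {w : List ℕ}
    (h : ∀ p ∈ T, w.length < p.length) : AvoidsSet T w :=
  fun p hp hc => (h p hp).not_ge hc.length_le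

lemma not_contains_of_pairwise_lt {w τ : List ℕ} (hw : w.Pairwise (· < ·))
    (hτ : IsPermList τ) (hτid : τ ≠ List.range' 1 τ.length) : ¬ Contains w τ := by
  rintro ⟨u, hu, hlen, hiso⟩
  refine hτid (hτ.eq_of_pairwise' ?_ (List.pairwise_lt_range' 1))
  have hu : u.Pairwise (· < ·) := hw.sublist hu
  rw [List.pairwise_iff_getElem] at hu ⊢
  intro i j hi hj hij
  have := (hiso i j (hlen ▸ hi) (hlen ▸ hj)).mp
  simp only [List.getD_eq_getElem _ _ hi, List.getD_eq_getElem _ _ hj,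
    List.getD_eq_getElem _ _ (hlen ▸ hi), List.getD_eq_getElem _ _ (hlen ▸ hj)] at this
  exact this (hu i j _ _ hij)

lemma contains_231_append_cons_iff {L R : List ℕ} {M : ℕ} (hL : ∀ x ∈ L, x < M)
    (hR : ∀ x ∈ R, x < M) :
    Contains (L ++ M :: R) [2, 3, 1] ↔
      Contains L [2, 3, 1] ∨ Contains R [2, 3, 1] ∨ ∃ a ∈ L, ∃ b ∈ R, b < a := by
  constructor
  · intro h
    obtain ⟨x, y, z, hsub, hzx, hxy⟩ := contains_231_iff.mp h
    obtain ⟨l₁, l₂, hxyz, h₁, h₂⟩ := List.sublist_append_iff.mp hsub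
    have cross (hx : x ∈ l₁) (hz : z ∈ l₂) : ∃ a ∈ L, ∃ b ∈ R, b < a := by
      have hzM : z ≠ M := (hzx.trans (hL x (h₁.subset hx))).ne
      exact ⟨x, h₁.subset hx, z, by simpa [hzM] using h₂.subset hz, hzx⟩
    rcases l₁ with _ | ⟨a, _ | ⟨b, _ | ⟨c, l₁⟩⟩⟩
    · subst hxyz
      rcases List.sublist_cons_iff.mp h₂ with h₂ | ⟨r, hr, h₂⟩
      · exact Or.inr (Or.inl (contains_231_iff.mpr ⟨x, y, z, h₂, hzx, hxy⟩))
      · simp only [List.cons.injEq] at hr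
        obtain ⟨rfl, rfl⟩ := hr
        have := hR y (h₂.subset (by simp))
        omega
    · simp only [List.cons_append, List.nil_append, List.cons.injEq] at hxyz
      obtain ⟨rfl, rfl⟩ := hxyz
      exact Or.inr (Or.inr (cross (by simp) (by simp)))
    · simp only [List.cons_append, List.nil_append, List.cons.injEq] at hxyz
      obtain ⟨rfl, rfl, rfl⟩ := hxyz
      exact Or.inr (Or.inr (cross (by simp) (by simp)))
    · simp only [List.cons_append, List.cons.injEq, List.nil_eq_append_iff] at hxyz
      obtain ⟨rfl, rfl, rfl, rfl, -⟩ := hxyz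
      exact Or.inl (contains_231_iff.mpr ⟨x, y, z, h₁, hzx, hxy⟩)
  · rintro (h | h | ⟨a, ha, b, hb, hba⟩)
    · exact h.mono (List.sublist_append_left _ _)
    · exact h.mono ((List.sublist_cons_self _ _).trans (List.sublist_append_right _ _))
    · exact contains_231_iff.mpr ⟨a, M, b,
        (List.singleton_sublist.mpr ha).append ((List.singleton_sublist.mpr hb).cons_cons M),
        hba, hL a ha⟩

/-- Knuth's stack-sorting map run from the stack `st` (head on top). -/
def stackSortFrom : List ℕ → List ℕ → List ℕ
  | [], st => st
  | x :: r, [] => stackSortFrom r [x]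
  | x :: r, y :: s => if x < y then stackSortFrom r (x :: y :: s) else y :: stackSortFrom (x :: r) s
termination_by w st => 2 * w.length + st.length

def stackSort (w : List ℕ) : List ℕ := stackSortFrom w []

lemma stackSortFrom_perm (w st : List ℕ) : stackSortFrom w st ~ w ++ st := by
  induction w, st using stackSortFrom.induct with
  | case1 st => simp [stackSortFrom]
  | case2 x r ih => simpa [stackSortFrom] using ih.trans (List.perm_append_singleton x r)
  | case3 x r y s h ih => simpa [stackSortFrom, h] using ih.trans List.perm_middle
  | case4 x r y s h ih =>
    simp only [stackSortFrom, h, if_false]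
    exact (ih.cons y).trans List.perm_middle.symm

@[simp]
lemma mem_stackSort {w : List ℕ} {a : ℕ} : a ∈ stackSort w ↔ a ∈ w := by
  unfold stackSort
  simpa using (stackSortFrom_perm w []).mem_iff (a := a)

lemma stackSortFrom_cons_of_forall_lt {M : ℕ} (R : List ℕ) {st : List ℕ}
    (hst : ∀ y ∈ st, y < M) : stackSortFrom (M :: R) st = st ++ stackSortFrom R [M] := by
  induction st with
  | nil => simp [stackSortFrom]
  | cons y s ih =>
    have hyM := hst y (by simp)
    simp only [stackSortFrom, if_neg (Nat.lt_asymm hyM), ih fun z hz => hst z (by simp [hz]),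
      List.cons_append]

lemma stackSortFrom_append_singleton {w st : List ℕ} {b : ℕ} (hw : ∀ x ∈ w, x < b)
    (hst : ∀ y ∈ st, y < b) : stackSortFrom w (st ++ [b]) = stackSortFrom w st ++ [b] := by
  induction w, st using stackSortFrom.induct with
  | case1 st => simp [stackSortFrom]
  | case2 x r ih =>
    have hxb := hw x (by simp)
    have := ih (fun z hz => hw z (by simp [hz])) (by simpa using hxb)
    simpa [stackSortFrom, hxb] using this
  | case3 x r y s h ih =>
    have := ih (fun z hz => hw z (by simp [hz])) (by simp_all)
    simpa [stackSortFrom, h] using this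
  | case4 x r y s h ih =>
    have := ih hw (fun z hz => hst z (by simp [hz]))
    simpa [stackSortFrom, h] using this

lemma stackSortFrom_append_cons {L st : List ℕ} {M : ℕ} (R : List ℕ) (hL : ∀ x ∈ L, x < M)
    (hst : ∀ y ∈ st, y < M) :
    stackSortFrom (L ++ M :: R) st = stackSortFrom L st ++ stackSortFrom R [M] := by
  induction L, st using stackSortFrom.induct with
  | case1 st => simp [stackSortFrom, stackSortFrom_cons_of_forall_lt R hst]
  | case2 x r ih =>
    have := ih (fun z hz => hL z (by simp [hz])) (by simpa using hL x (by simp))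
    simpa [stackSortFrom] using this
  | case3 x r y s h ih =>
    have := ih (fun z hz => hL z (by simp [hz])) (by simp_all)
    simpa [stackSortFrom, h] using this
  | case4 x r y s h ih =>
    have := ih hL (fun z hz => hst z (by simp [hz]))
    simpa [stackSortFrom, h] using this

lemma stackSort_append_cons {L R : List ℕ} {M : ℕ} (hL : ∀ x ∈ L, x < M)
    (hR : ∀ x ∈ R, x < M) :
    stackSort (L ++ M :: R) = stackSort L ++ stackSort R ++ [M] := by
  rw [stackSort, stackSortFrom_append_cons R hL (by simp), ← List.nil_append [M],
    stackSortFrom_append_singleton hR (by simp), List.append_assoc]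
  rfl

lemma exists_eq_append_cons_of_forall_le {w : List ℕ} {M : ℕ} (hw : w.Nodup) (hM : M ∈ w)
    (hle : ∀ x ∈ w, x ≤ M) :
    ∃ L R, w = L ++ M :: R ∧ (∀ x ∈ L, x < M) ∧ ∀ x ∈ R, x < M := by
  obtain ⟨L, R, rfl⟩ := List.append_of_mem hM
  have hM : M ∉ L ++ R := (List.nodup_cons.mp (List.nodup_middle.mp hw)).1
  refine ⟨L, R, rfl, fun x hx => ?_, fun x hx => ?_⟩ <;>
    refine lt_of_le_of_ne (hle x (by simp [hx])) fun hxM => hM ?_ <;> simp [← hxM, hx]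

theorem pairwise_stackSort_iff {w : List ℕ} (hw : w.Nodup) :
    (stackSort w).Pairwise (· ≤ ·) ↔ ¬ Contains w [2, 3, 1] := by
  induction hlen : w.length using Nat.strong_induction_on generalizing w with
  | _ n ih =>
  rcases hmax : w.max? with _ | M
  · obtain rfl := List.max?_eq_none_iff.mp hmax
    exact iff_of_true (by simp [stackSort, stackSortFrom]) fun h => by simpa using h.length_le
  obtain ⟨hM, hle⟩ := List.max?_eq_some_iff.mp hmax
  obtain ⟨L, R, rfl, hL, hR⟩ := exists_eq_append_cons_of_forall_le hw hM hle
  have hnd : (L ++ R).Nodup := (List.nodup_cons.mp (List.nodup_middle.mp hw)).2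
  simp only [List.length_append, List.length_cons] at hlen
  rw [stackSort_append_cons hL hR, contains_231_append_cons_iff hL hR]
  simp only [List.pairwise_append, List.pairwise_singleton, List.mem_append, List.mem_singleton,
    mem_stackSort, not_or, not_exists, not_and, not_lt]
  rw [ih L.length (by omega) (hnd.sublist (List.sublist_append_left _ _)) rfl,
    ih R.length (by omega) (hnd.sublist (List.sublist_append_right _ _)) rfl]
  refine ⟨fun h => h.1, fun h => ⟨h, trivial, ?_⟩⟩
  rintro a (ha | ha) _ rfl
  exacts [(hL a ha).le, (hR a ha).le]

lemma stackSort_eq_range'_iff {w : List ℕ} {s m : ℕ} (hw : w ~ List.range' s m) :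
    stackSort w = List.range' s m ↔ ¬ Contains w [2, 3, 1] := by
  have hpairwise : (List.range' s m).Pairwise (· ≤ ·) :=
    (List.pairwise_lt_range' 1).imp le_of_lt
  rw [← pairwise_stackSort_iff (hw.nodup_iff.mpr List.nodup_range')]
  have hperm : stackSort w ~ List.range' s m := (stackSortFrom_perm w []).trans (by simpa using hw)
  exact ⟨fun h => h ▸ hpairwise, fun h => hperm.eq_of_pairwise' h hpairwise⟩

lemma cons_perm_range'_succ_iff {s n : ℕ} {w : List ℕ} :
    (n + s) :: w ~ List.range' s (n + 1) ↔ w ~ List.range' s n := by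
  rw [List.range'_1_concat, Nat.add_comm n s]
  exact ⟨fun h => (h.trans (List.perm_append_singleton _ _)).cons_inv,
    fun h => (h.cons _).trans (List.perm_append_singleton _ _).symm⟩

lemma perm_range'_of_append_perm {L R : List ℕ} {s m : ℕ} (h : L ++ R ~ List.range' s m)
    (hLR : ∀ a ∈ L, ∀ b ∈ R, a ≤ b) :
    L ~ List.range' s L.length ∧ R ~ List.range' (s + L.length) R.length := by
  have hsortL := L.mergeSort_perm (· ≤ ·)
  have hsortR := R.mergeSort_perm (· ≤ ·)
  have hsorted : (L.mergeSort (· ≤ ·) ++ R.mergeSort (· ≤ ·)).Pairwise (· ≤ ·) :=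
    List.pairwise_append.mpr ⟨List.pairwise_mergeSort' _ L, List.pairwise_mergeSort' _ R,
      fun a ha b hb => hLR a (hsortL.subset ha) b (hsortR.subset hb)⟩
  have hm : m = L.length + R.length := by simpa using h.length_eq.symm
  have heq := (hsortL.append hsortR).trans h |>.eq_of_pairwise' hsorted
    ((List.pairwise_lt_range' 1).imp le_of_lt)
  rw [hm, ← List.range'_append_1] at heq
  obtain ⟨hL, hR⟩ := List.append_inj heq (by simp)
  exact ⟨hL ▸ hsortL.symm, by simpa [hR] using hsortR.symm⟩

lemma append_cons_inj_of_notMem {α : Type*} [DecidableEq α] {A B C D : List α} {M : α}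
    (h : A ++ M :: B = C ++ M :: D) (hA : M ∉ A) (hC : M ∉ C) : A = C ∧ B = D := by
  have hlen : A.length = C.length := by
    simpa [List.idxOf_append_of_notMem hA, List.idxOf_append_of_notMem hC] using
      congrArg (List.idxOf M) h
  obtain ⟨rfl, hBD⟩ := List.append_inj h hlen
  exact ⟨rfl, List.cons_injective hBD⟩

section Simulation

variable {T : Set (List ℕ)}

lemma sTaux_cons_of_avoidsSet {x : ℕ} {r st out : List ℕ} (h : AvoidsSet T (x :: st)) :
    sTaux T (x :: r) st out = sTaux T r (x :: st) out := by
  cases st <;> simp [sTaux, h]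

lemma sTaux_cons_cons_of_not_avoidsSet {x y : ℕ} {r s out : List ℕ}
    (h : ¬ AvoidsSet T (x :: y :: s)) :
    sTaux T (x :: r) (y :: s) out = sTaux T (x :: r) s (out ++ [y]) := by
  rw [sTaux.eq_3, if_neg h]

lemma exists_sTaux_append_singleton_eq (hT : ∀ p ∈ T, 3 ≤ p.length) (w st out : List ℕ)
    (b : ℕ) :
    ∃ z, sTaux T w (st ++ [b]) out = z ++ [b] := by
  obtain ⟨stack, hstack⟩ : ∃ stack, stack = st ++ [b] := ⟨_, rfl⟩
  rw [← hstack]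
  induction w, stack, out using sTaux.induct T generalizing st with
  | case1 stack out => exact ⟨out ++ st, by rw [sTaux.eq_1, hstack, List.append_assoc]⟩
  | case2 x rest stack out hav ih =>
    rw [sTaux_cons_of_avoidsSet hav]
    exact ih (x :: st) (by rw [hstack, List.cons_append])
  | case3 x rest out _ _ => simp at hstack
  | case4 x rest out y s hnav ih =>
    rw [sTaux_cons_cons_of_not_avoidsSet hnav]
    cases st with
    | nil =>
      obtain ⟨rfl, rfl⟩ : y = b ∧ s = [] := by simpa using hstack
      exact absurd (avoidsSet_of_length_lt fun p hp => lt_of_lt_of_le (by simp) (hT p hp)) hnav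
    | cons y' st => exact ih st (List.cons.inj hstack).2

lemma sTaux_append_singleton_eq (h213 : [2, 1, 3] ∈ T)
    (hinc : ∀ w : List ℕ, w.Pairwise (· < ·) → AvoidsSet T w) {w st : List ℕ} {b : ℕ}
    (out : List ℕ) (hw : ∀ x ∈ w, x < b)
    (hst : (st ++ [b]).Pairwise (· < ·)) (hnd : (w ++ st).Nodup) :
    sTaux T w (st ++ [b]) out = out ++ stackSortFrom w st ++ [b] := by
  induction w, st using stackSortFrom.induct generalizing out with
  | case1 st => simp [sTaux, stackSortFrom]
  | case2 x r ih =>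
    have hxb : x < b := hw x (by simp)
    have hpush : AvoidsSet T [x, b] := hinc _ (by simpa using hxb)
    rw [List.nil_append, sTaux_cons_of_avoidsSet hpush]
    simpa [stackSortFrom] using ih out (fun z hz => hw z (by simp [hz])) (by simpa using hxb)
      (List.perm_append_singleton x r |>.nodup_iff.mpr (by simpa using hnd))
  | case3 x r y s hxy ih =>
    have hsorted : (x :: y :: (s ++ [b])).Pairwise (· < ·) := by
      refine List.pairwise_cons.mpr ⟨fun z hz => ?_, by simpa using hst⟩
      rcases List.mem_cons.mp hz with rfl | hz
      exacts [hxy, hxy.trans ((List.pairwise_cons.mp hst).1 z hz)]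
    rw [List.cons_append, sTaux_cons_of_avoidsSet (hinc _ hsorted)]
    simpa [stackSortFrom, hxy] using ih out (fun z hz => hw z (by simp [hz]))
      (by simpa using hsorted) (List.perm_middle.nodup_iff.mpr hnd)
  | case4 x r y s hxy ih =>
    have hne : x ≠ y := fun h => (List.nodup_cons.mp hnd).1 (by simp [h])
    have hyx : y < x := by omega
    have hpop : ¬ AvoidsSet T (x :: y :: (s ++ [b])) := fun hav =>
      hav _ h213 ⟨[x, y, b], by simp, ordIso_213_iff.mpr ⟨hyx, hw x (by simp)⟩⟩
    rw [List.cons_append, sTaux_cons_cons_of_not_avoidsSet hpop]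
    simpa [stackSortFrom, hxy] using ih (out ++ [y]) hw (List.pairwise_cons.mp hst).2
      (hnd.sublist (by simp))

lemma exists_sT_cons_eq (hT : ∀ p ∈ T, 3 ≤ p.length) (p : ℕ) (w : List ℕ) :
    ∃ z, sT T (p :: w) = z ++ [p] := by
  have hpush : AvoidsSet T [p] :=
    avoidsSet_of_length_lt fun q hq => lt_of_lt_of_le (by simp) (hT q hq)
  rw [sT, sTaux_cons_of_avoidsSet hpush]
  exact exists_sTaux_append_singleton_eq hT w [] [] p

lemma sT_cons_eq_stackSort (h213 : [2, 1, 3] ∈ T)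
    (hinc : ∀ w : List ℕ, w.Pairwise (· < ·) → AvoidsSet T w) {b : ℕ} {w : List ℕ}
    (hw : ∀ x ∈ w, x < b) (hnd : w.Nodup) : sT T (b :: w) = stackSort w ++ [b] := by
  rw [sT, sTaux_cons_of_avoidsSet (hinc [b] (List.pairwise_singleton _ _)), ← List.nil_append [b],
    sTaux_append_singleton_eq h213 hinc [] hw (by simp) (by simpa)]
  rfl

theorem sT_eq_range'_iff (hT : ∀ p ∈ T, 3 ≤ p.length)
    (h213 : [2, 1, 3] ∈ T) (hinc : ∀ w : List ℕ, w.Pairwise (· < ·) → AvoidsSet T w)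
    {n : ℕ} {π : List ℕ} (hπ : π ~ List.range' 1 (n + 1)) :
    sT T π = List.range' 1 (n + 1) ↔
      ∃ ρ, π = (n + 1) :: ρ ∧ ρ ~ List.range' 1 n ∧ ¬ Contains ρ [2, 3, 1] := by
  have hbound {ρ : List ℕ} (hρ : ρ ~ List.range' 1 n) : ∀ x ∈ ρ, x < n + 1 :=
    fun x hx => by have := List.mem_range'_1.mp (hρ.subset hx); omega
  constructor
  · intro hsort
    obtain ⟨p, w, rfl⟩ := List.exists_cons_of_length_eq_add_one (by simpa using hπ.length_eq)
    obtain ⟨z, hz⟩ := exists_sT_cons_eq hT p w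
    rw [hz, List.range'_1_concat, Nat.add_comm 1 n] at hsort
    obtain rfl : p = n + 1 := by simpa using (List.append_inj' hsort rfl).2
    have hw := cons_perm_range'_succ_iff.mp hπ
    rw [sT_cons_eq_stackSort h213 hinc (hbound hw) (hw.nodup_iff.mpr List.nodup_range')] at hz
    exact ⟨w, rfl, hw,
      (stackSort_eq_range'_iff hw).mp (List.append_cancel_right (hz.trans hsort))⟩
  · rintro ⟨ρ, rfl, hρ, hav⟩
    rw [sT_cons_eq_stackSort h213 hinc (hbound hρ) (hρ.nodup_iff.mpr List.nodup_range'),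
      (stackSort_eq_range'_iff hρ).mpr hav, List.range'_1_concat, Nat.add_comm 1 n]

lemma setOf_sT_eq_range' (hT : ∀ p ∈ T, 3 ≤ p.length)
    (h213 : [2, 1, 3] ∈ T) (hinc : ∀ w : List ℕ, w.Pairwise (· < ·) → AvoidsSet T w)
    (n : ℕ) :
    {π : List ℕ | IsPermList π ∧ π.length = n + 1 ∧ sT T π = List.range' 1 (n + 1)} =
      List.cons (n + 1) '' {ρ : List ℕ | ρ ~ List.range' 1 n ∧ ¬ Contains ρ [2, 3, 1]} := by
  ext π
  constructor
  · rintro ⟨hπ, hlen, hsort⟩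
    obtain ⟨ρ, rfl, hρ⟩ := (sT_eq_range'_iff hT h213 hinc (hlen ▸ hπ)).mp hsort
    exact ⟨ρ, hρ, rfl⟩
  · rintro ⟨ρ, ⟨hρ, hav⟩, rfl⟩
    have hlen : ((n + 1) :: ρ).length = n + 1 := by simpa using hρ.length_eq
    have hπ : (n + 1) :: ρ ~ List.range' 1 (n + 1) := cons_perm_range'_succ_iff.mpr hρ
    exact ⟨hlen ▸ hπ, hlen, (sT_eq_range'_iff hT h213 hinc hπ).mpr ⟨ρ, rfl, hρ, hav⟩⟩

end Simulation

def avoider231 : BinaryTree Unit → ℕ → List ℕ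
  | .nil, _ => []
  | .node _ l r, s =>
    avoider231 l s ++ (s + l.numNodes + r.numNodes) :: avoider231 r (s + l.numNodes)

lemma avoider231_perm (t : BinaryTree Unit) (s : ℕ) :
    avoider231 t s ~ List.range' s t.numNodes := by
  induction t generalizing s with
  | nil => simp [avoider231]
  | node _ l r ihl ihr =>
    rw [avoider231, BinaryTree.numNodes, List.range'_1_concat, ← List.range'_append_1,
      List.append_assoc, ← Nat.add_assoc]
    exact (ihl s).append (((ihr _).cons _).trans (List.perm_append_singleton _ _).symm)

lemma not_contains_231_avoider231 (t : BinaryTree Unit) (s : ℕ) :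
    ¬ Contains (avoider231 t s) [2, 3, 1] := by
  induction t generalizing s with
  | nil => exact fun h => by simpa [avoider231] using h.length_le
  | node _ l r ihl ihr =>
    have hl : ∀ x ∈ avoider231 l s, s ≤ x ∧ x < s + l.numNodes :=
      fun x hx => List.mem_range'_1.mp ((avoider231_perm l s).subset hx)
    have hr : ∀ x ∈ avoider231 r (s + l.numNodes),
        s + l.numNodes ≤ x ∧ x < s + l.numNodes + r.numNodes :=
      fun x hx => List.mem_range'_1.mp ((avoider231_perm r _).subset hx)
    rw [avoider231, contains_231_append_cons_iff (fun x hx => by grind) (fun x hx => by grind)]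
    rintro (h | h | ⟨a, ha, b, hb, hba⟩)
    exacts [ihl s h, ihr _ h, by grind]

lemma length_avoider231 (t : BinaryTree Unit) (s : ℕ) : (avoider231 t s).length = t.numNodes := by
  simpa using (avoider231_perm t s).length_eq

lemma avoider231_injective (s : ℕ) : Function.Injective (avoider231 · s) := by
  intro t₁ t₂ h
  induction t₁ generalizing t₂ s with
  | nil => cases t₂ <;> simp_all [avoider231]
  | node _ l r ihl ihr =>
    cases t₂ with
    | nil => simp [avoider231] at h
    | node _ l' r' =>
      have hlen := congrArg List.length h
      simp only [avoider231, List.length_append, List.length_cons, length_avoider231] at h hlen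
      have hroot : s + l'.numNodes + r'.numNodes = s + l.numNodes + r.numNodes := by omega
      rw [hroot] at h
      have hnotMem {t : BinaryTree Unit} (ht : t.numNodes ≤ l.numNodes + r.numNodes) :
          s + l.numNodes + r.numNodes ∉ avoider231 t s := fun hmem => by
        have := List.mem_range'_1.mp ((avoider231_perm t s).subset hmem)
        omega
      obtain ⟨hl, hr⟩ := append_cons_inj_of_notMem h (hnotMem (by omega)) (hnotMem (by omega))
      obtain rfl := ihl s hl
      rw [ihr _ hr]

lemma exists_avoider231_eq {s m : ℕ} {w : List ℕ} (hw : w ~ List.range' s m)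
    (havoid : ¬ Contains w [2, 3, 1]) :
    ∃ t : BinaryTree Unit, t.numNodes = m ∧ avoider231 t s = w := by
  induction m using Nat.strong_induction_on generalizing s w with
  | _ m ih =>
  rcases m with _ | m
  · exact ⟨.nil, rfl, by simpa [avoider231] using hw.symm⟩
  obtain ⟨L, R, rfl, hL, hR⟩ := exists_eq_append_cons_of_forall_le (M := m + s)
    (hw.nodup_iff.mpr List.nodup_range') (hw.mem_iff.mpr (List.mem_range'_1.mpr (by omega)))
    (fun x hx => by have := List.mem_range'_1.mp (hw.subset hx); omega)
  rw [contains_231_append_cons_iff hL hR, not_or, not_or] at havoid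
  obtain ⟨havoidL, havoidR, hLR⟩ := havoid
  have hLR' : L ++ R ~ List.range' s m :=
    cons_perm_range'_succ_iff.mp (List.perm_middle.symm.trans hw)
  have hm : m = L.length + R.length := by simpa using hLR'.length_eq.symm
  obtain ⟨hLp, hRp⟩ := perm_range'_of_append_perm hLR'
    fun a ha b hb => not_lt.mp fun hba => hLR ⟨a, ha, b, hb, hba⟩
  obtain ⟨tl, htl, rfl⟩ := ih L.length (by omega) hLp havoidL
  obtain ⟨tr, htr, rfl⟩ := ih R.length (by omega) hRp havoidR
  simp only [length_avoider231] at hm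
  refine ⟨.node () tl tr, by simp [BinaryTree.numNodes, hm], ?_⟩
  simp only [avoider231, length_avoider231, hm]
  congr 2
  omega

theorem ncard_setOf_perm_range'_not_contains_231 (s m : ℕ) :
    {w : List ℕ | w ~ List.range' s m ∧ ¬ Contains w [2, 3, 1]}.ncard = catalan m := by
  have himage : {w : List ℕ | w ~ List.range' s m ∧ ¬ Contains w [2, 3, 1]} =
      (avoider231 · s) '' (BinaryTree.treesOfNumNodesEq m : Set (BinaryTree Unit)) := by
    ext w
    simp only [Set.mem_ofPred_eq, Set.mem_image, Finset.mem_coe, BinaryTree.mem_treesOfNumNodesEq]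
    constructor
    · rintro ⟨hw, havoid⟩
      exact exists_avoider231_eq hw havoid
    · rintro ⟨t, rfl, rfl⟩
      exact ⟨avoider231_perm t s, not_contains_231_avoider231 t s⟩
  rw [himage, Set.ncard_image_of_injective _ (avoider231_injective s), Set.ncard_coe_finset,
    BinaryTree.treesOfNumNodesEq_card_eq_catalan]

/-- For non-identity `τ` of length ≥ 3: `s_{213,τ}` sorts `π` of length `n` to the
identity iff `π = n·ρ` with `ρ` a 231-avoiding permutation of `{1,…,n-1}`; such
permutations are counted by `C_{n-1}`. -/
theorem stmt12 (τ : List ℕ) (hτ : IsPermList τ) (hτlen : 3 ≤ τ.length)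
    (hτid : τ ≠ List.range' 1 τ.length) (n : ℕ) (hn : 1 ≤ n) :
    (∀ π : List ℕ, IsPermList π → π.length = n →
      (sT ({[2,1,3], τ} : Set (List ℕ)) π = List.range' 1 n ↔
        ∃ ρ : List ℕ, π = n :: ρ ∧ ρ.Perm (List.range' 1 (n - 1)) ∧
          ¬ Contains ρ [2,3,1])) ∧
    {π : List ℕ | IsPermList π ∧ π.length = n ∧
      sT ({[2,1,3], τ} : Set (List ℕ)) π = List.range' 1 n}.ncard
      = catalan (n - 1) := by
  obtain ⟨n, rfl⟩ : ∃ m, n = m + 1 := ⟨n - 1, by omega⟩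
  have hT : ∀ p ∈ ({[2,1,3], τ} : Set (List ℕ)), 3 ≤ p.length := by
    rintro p (rfl | rfl)
    exacts [le_rfl, hτlen]
  have hinc : ∀ w : List ℕ, w.Pairwise (· < ·) → AvoidsSet {[2,1,3], τ} w := by
    rintro w hw p (rfl | rfl)
    exacts [not_contains_of_pairwise_lt hw (List.Perm.swap 1 2 [3]) (by decide),
      not_contains_of_pairwise_lt hw hτ hτid]
  have h213 : [2, 1, 3] ∈ ({[2,1,3], τ} : Set (List ℕ)) := Set.mem_insert _ _
  rw [Nat.add_sub_cancel]
  refine ⟨fun π hπ hlen => sT_eq_range'_iff hT h213 hinc (hlen ▸ hπ), ?_⟩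
  rw [setOf_sT_eq_range' hT h213 hinc, Set.ncard_image_of_injective _ List.cons_injective,
    ncard_setOf_perm_range'_not_contains_231]
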